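/- Let Φ̂ : ℝ → M_M(ℂ) be measurable with ∑_{n∈ℤ} Φ̂(ξ+nN) (Φ̂(ξ+nN))* = 2 I_M for a.e. ξ ∈ ℝ (the series converging absolutely a.e.). For k, ℓ ∈ {0, …, 2N−1} let H_k(ω) := (1/√(2N)) ∑_{λ∈Λ} H_{λ,k} e^{−2πiλω} with M×M matrix coefficients {H_{λ,k}}_{λ∈Λ}, only finitely many nonzero (so each H_k is N-periodic), and set Ψ̂_k(ξ) := H_k(ξ/(2N)) Φ̂(ξ/(2N)). Then for a.e. ξ ∈ ℝ: ∑_{j∈ℤ} Ψ̂_k(2Nξ + Nj) (Ψ̂_ℓ(2Nξ + Nj))* = 2 ∑_{s=0}^{2N−1} H_k(ξ + s/2) (H_ℓ(ξ + s/2))*. (Key splitting identity in the proof of the paper's Lemma 4.4.) -/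
import Mathlib


open MeasureTheory Complex Matrix Filter Topology

noncomputable section

/-- The translation set Λ = {2m : m ∈ ℤ} ∪ {r/N + 2m : m ∈ ℤ}. -/
def SetLambda (N : ℕ) (r : ℤ) : Set ℝ :=
  {x | ∃ m : ℤ, x = 2 * m} ∪ {x | ∃ m : ℤ, x = (r : ℝ) / N + 2 * m}

/-- The symbol H(ω) = (1/√(2N)) ∑_λ c_λ e^{−2πiλω}. -/
def symbolFn {M : ℕ} (N : ℕ) (c : ℝ → Matrix (Fin M) (Fin M) ℂ) (ω : ℝ) :
    Matrix (Fin M) (Fin M) ℂ :=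
  (1 / (Real.sqrt (2 * N) : ℂ)) •
    ∑ᶠ lam : ℝ, Complex.exp ((-2 : ℂ) * (Real.pi : ℂ) * Complex.I * (lam : ℂ) * (ω : ℂ)) • c lam

/-- Ψ̂_k(ξ) = H_k(ξ/(2N)) Φ̂(ξ/(2N)). -/
def psiHat {M : ℕ} (N : ℕ) (c : ℝ → Matrix (Fin M) (Fin M) ℂ)
    (Φhat : ℝ → Matrix (Fin M) (Fin M) ℂ) (ξ : ℝ) : Matrix (Fin M) (Fin M) ℂ :=
  symbolFn N c (ξ / (2 * N)) * Φhat (ξ / (2 * N))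

/-- Periodicity of the symbol: `symbolFn N c` has period `N` when the coefficients are
supported on `Λ`. -/
lemma symbolFn_periodic {M N : ℕ} (hN : 1 ≤ N) (r : ℤ)
    (c : ℝ → Matrix (Fin M) (Fin M) ℂ)
    (hsupp : ∀ x : ℝ, x ∉ SetLambda N r → c x = 0) (ω : ℝ) (m : ℤ) :
    symbolFn N c (ω + N * m) = symbolFn N c ω := by
  unfold symbolFn
  congr 1
  apply finsum_congr
  intro lam
  by_cases hc : c lam = 0
  · simp [hc]
  · have hlam : lam ∈ SetLambda N r := by
      by_contra h; exact hc (hsupp lam h)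
    have hN0 : (N : ℝ) ≠ 0 := Nat.cast_ne_zero.mpr (by omega)
    obtain ⟨t, ht⟩ : ∃ t : ℤ, lam * (N : ℝ) = (t : ℝ) := by
      rcases hlam with ⟨m', hm'⟩ | ⟨m', hm'⟩
      · exact ⟨2 * m' * N, by push_cast [hm']; ring⟩
      · refine ⟨r + 2 * m' * N, ?_⟩
        rw [hm']
        push_cast
        field_simp
    congr 1
    have htC : (lam : ℂ) * (N : ℂ) = (t : ℂ) := by exact_mod_cast congrArg Complex.ofReal ht
    have hkey : ((-2 : ℂ) * (Real.pi : ℂ) * Complex.I * (lam : ℂ) * ((ω + N * m : ℝ) : ℂ))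
        = (-2 : ℂ) * (Real.pi : ℂ) * Complex.I * (lam : ℂ) * (ω : ℂ)
          + ((-(t * m) : ℤ) : ℂ) * (2 * (Real.pi : ℂ) * Complex.I) := by
      push_cast
      linear_combination ((-2 : ℂ) * (Real.pi : ℂ) * Complex.I * (m : ℂ)) * htC
    rw [hkey, Complex.exp_add, Complex.exp_int_mul_two_pi_mul_I, mul_one]

/-- key splitting identity in Lemma 4.4:
∑_{j∈ℤ} Ψ̂_k(2Nξ+Nj) (Ψ̂_ℓ(2Nξ+Nj))* = 2 ∑_{s=0}^{2N−1} H_k(ξ+s/2) (H_ℓ(ξ+s/2))*. -/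
theorem stmt5 {M N : ℕ} (hM : 2 ≤ M) (hN : 1 ≤ N) (r : ℤ) (hodd : Odd r)
    (hr1 : 1 ≤ r) (hr2 : r ≤ 2 * (N : ℤ) - 1) (hcop : Int.gcd r (N : ℤ) = 1)
    (Φhat : ℝ → Matrix (Fin M) (Fin M) ℂ)
    (hmeas : ∀ i j, Measurable (fun ξ => Φhat ξ i j))
    (hΦsum : ∀ᵐ ξ : ℝ ∂volume,
      HasSum (fun n : ℤ => Φhat (ξ + n * N) * (Φhat (ξ + n * N))ᴴ)
        ((2 : ℂ) • (1 : Matrix (Fin M) (Fin M) ℂ)))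
    (Hc : Fin (2 * N) → ℝ → Matrix (Fin M) (Fin M) ℂ)
    (hHfin : ∀ k, (Function.support (Hc k)).Finite)
    (hHsupp : ∀ k, ∀ x : ℝ, x ∉ SetLambda N r → Hc k x = 0) :
    ∀ᵐ ξ : ℝ ∂volume, ∀ k ℓ : Fin (2 * N),
      HasSum (fun j : ℤ =>
          psiHat N (Hc k) Φhat (2 * N * ξ + N * j) *
            (psiHat N (Hc ℓ) Φhat (2 * N * ξ + N * j))ᴴ)
        ((2 : ℂ) • ∑ s ∈ Finset.range (2 * N),
          symbolFn N (Hc k) (ξ + s / 2) * (symbolFn N (Hc ℓ) (ξ + s / 2))ᴴ) := by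
  classical
  have hN0 : (N : ℝ) ≠ 0 := Nat.cast_ne_zero.mpr (by omega)
  haveI : NeZero (2 * N) := ⟨by omega⟩
  have key : ∀ᵐ ξ : ℝ ∂volume, ∀ s : Fin (2 * N),
      HasSum (fun q : ℤ => Φhat ((ξ + (s : ℝ) / 2) + q * N) *
          (Φhat ((ξ + (s : ℝ) / 2) + q * N))ᴴ)
        ((2 : ℂ) • (1 : Matrix (Fin M) (Fin M) ℂ)) := by
    rw [MeasureTheory.ae_all_iff]
    intro s
    exact (measurePreserving_add_right volume ((s : ℝ) / 2)).quasiMeasurePreserving.ae hΦsum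
  filter_upwards [key] with ξ hξ k ℓ
  set e : ℤ ≃ ℤ × Fin (2 * N) := Int.divModEquiv (2 * N) with he
  refine (e.symm.hasSum_iff).mp ?_
  -- the function on ℤ × Fin (2N)
  have hfun : ∀ p : ℤ × Fin (2 * N),
      ((fun j : ℤ =>
          psiHat N (Hc k) Φhat (2 * N * ξ + N * j) *
            (psiHat N (Hc ℓ) Φhat (2 * N * ξ + N * j))ᴴ) ∘ e.symm) p
      = (symbolFn N (Hc k) (ξ + (p.2 : ℝ) / 2) *
          (Φhat ((ξ + (p.2 : ℝ) / 2) + p.1 * N) * (Φhat ((ξ + (p.2 : ℝ) / 2) + p.1 * N))ᴴ)) *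
          (symbolFn N (Hc ℓ) (ξ + (p.2 : ℝ) / 2))ᴴ := by
    rintro ⟨q, s⟩
    have harg : (2 * (N : ℝ) * ξ + N * ((e.symm (q, s) : ℤ) : ℝ)) / (2 * N)
        = (ξ + (s : ℝ) / 2) + N * q := by
      have : ((e.symm (q, s) : ℤ) : ℝ) = q * (2 * N) + s := by
        simp [he, Int.divModEquiv]
      rw [this]
      field_simp
      ring
    simp only [Function.comp_apply, psiHat]
    rw [harg, symbolFn_periodic hN r (Hc k) (hHsupp k),
      symbolFn_periodic hN r (Hc ℓ) (hHsupp ℓ)]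
    have hNq : (ξ + (s : ℝ) / 2) + (N : ℝ) * q = (ξ + (s : ℝ) / 2) + (q : ℝ) * N := by ring
    rw [hNq]
    rw [Matrix.conjTranspose_mul]
    simp only [mul_assoc]
  refine HasSum.congr_fun ?_ hfun
  -- fiberwise sums
  have fiber : ∀ s : Fin (2 * N),
      HasSum (fun q : ℤ =>
        (symbolFn N (Hc k) (ξ + (s : ℝ) / 2) *
          (Φhat ((ξ + (s : ℝ) / 2) + q * N) * (Φhat ((ξ + (s : ℝ) / 2) + q * N))ᴴ)) *
          (symbolFn N (Hc ℓ) (ξ + (s : ℝ) / 2))ᴴ)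
        ((2 : ℂ) • (symbolFn N (Hc k) (ξ + (s : ℝ) / 2) *
          (symbolFn N (Hc ℓ) (ξ + (s : ℝ) / 2))ᴴ)) := by
    intro s
    have h1 := ((hξ s).mul_left (symbolFn N (Hc k) (ξ + (s : ℝ) / 2))).mul_right
      ((symbolFn N (Hc ℓ) (ξ + (s : ℝ) / 2))ᴴ)
    have h2 : symbolFn N (Hc k) (ξ + (s : ℝ) / 2) * ((2 : ℂ) • (1 : Matrix (Fin M) (Fin M) ℂ)) *
        (symbolFn N (Hc ℓ) (ξ + (s : ℝ) / 2))ᴴ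
        = (2 : ℂ) • (symbolFn N (Hc k) (ξ + (s : ℝ) / 2) *
            (symbolFn N (Hc ℓ) (ξ + (s : ℝ) / 2))ᴴ) := by
      rw [mul_smul_comm, mul_one, smul_mul_assoc]
    rwa [h2] at h1
  -- glue the fibers
  have hglue : HasSum (fun p : ℤ × Fin (2 * N) =>
      ∑ s : Fin (2 * N), (if p.2 = s then
        (symbolFn N (Hc k) (ξ + (s : ℝ) / 2) *
          (Φhat ((ξ + (s : ℝ) / 2) + p.1 * N) * (Φhat ((ξ + (s : ℝ) / 2) + p.1 * N))ᴴ)) *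
          (symbolFn N (Hc ℓ) (ξ + (s : ℝ) / 2))ᴴ else 0))
      (∑ s : Fin (2 * N), (2 : ℂ) • (symbolFn N (Hc k) (ξ + (s : ℝ) / 2) *
          (symbolFn N (Hc ℓ) (ξ + (s : ℝ) / 2))ᴴ)) := by
    refine hasSum_sum ?_
    intro s _
    have hinj : Function.Injective (fun q : ℤ => ((q, s) : ℤ × Fin (2 * N))) := by
      intro a b hab; simpa using congrArg Prod.fst hab
    refine (hinj.hasSum_iff ?_).mp ?_
    · rintro ⟨q, s'⟩ hx
      have : s' ≠ s := by
        intro h; exact hx ⟨q, by simp [h]⟩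
      simp [this]
    · exact (fiber s).congr_fun (fun q => by simp)
  have htarget : (∑ s : Fin (2 * N), (2 : ℂ) • (symbolFn N (Hc k) (ξ + (s : ℝ) / 2) *
          (symbolFn N (Hc ℓ) (ξ + (s : ℝ) / 2))ᴴ))
      = (2 : ℂ) • ∑ s ∈ Finset.range (2 * N),
          symbolFn N (Hc k) (ξ + (s : ℝ) / 2) * (symbolFn N (Hc ℓ) (ξ + (s : ℝ) / 2))ᴴ := by
    rw [← Finset.smul_sum]
    congr 1
    exact Fin.sum_univ_eq_sum_range
      (fun s : ℕ => symbolFn N (Hc k) (ξ + (s : ℝ) / 2) * (symbolFn N (Hc ℓ) (ξ + (s : ℝ) / 2))ᴴ)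
      (2 * N)
  rw [htarget] at hglue
  refine hglue.congr_fun ?_
  rintro ⟨q, s⟩
  simp
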